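/- Let H be a Hopf *-algebra with invertible antipode and B a braided-commutative *-algebra in right H-crossed modules with unitary action and coaction. Then the map ⊛: B ⊗ H → H ⊗ B, (a ⊗ h)^⊛ = S⁻¹(h*) ⊗ a*, is an antilinear anti-algebra map from the smash product B # H^{op} to H # B: ((a⊗h)(b⊗g))^⊛ = (b⊗g)^⊛ (a⊗h)^⊛. -/

import Mathlib

open TensorProduct

noncomputable section

variable (H : Type) [Ring H] [HopfAlgebra ℂ H] [StarRing H] [StarModule ℂ H]
variable (B : Type) [Ring B] [Algebra ℂ B] [StarRing B] [StarModule ℂ B]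
variable (act : B ⊗[ℂ] H →ₗ[ℂ] B) (coact : B →ₗ[ℂ] B ⊗[ℂ] H)

/-- `(a ◁ h₂)₍₀₎ ⊗ h₁ · (a ◁ h₂)₍₁₎` for a right action `act` and right coaction `coact`. -/
def ydLHS (a : B) (h : H) : B ⊗[ℂ] H :=
  (TensorProduct.map (LinearMap.id : B →ₗ[ℂ] B) (LinearMap.mul' ℂ H))
    ((TensorProduct.assoc ℂ B H H)
      ((TensorProduct.map (TensorProduct.comm ℂ H B).toLinearMap (LinearMap.id : H →ₗ[ℂ] H))
        ((TensorProduct.assoc ℂ H B H).symm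
          ((TensorProduct.map (LinearMap.id : H →ₗ[ℂ] H)
              (coact ∘ₗ act ∘ₗ TensorProduct.mk ℂ B H a))
            (Coalgebra.comul (R := ℂ) h)))))

/-- `a₍₀₎ ◁ h₁ ⊗ a₍₁₎ · h₂`. -/
def ydRHS (a : B) (h : H) : B ⊗[ℂ] H :=
  (TensorProduct.map act (LinearMap.mul' ℂ H))
    ((TensorProduct.tensorTensorTensorComm ℂ B H H H)
      (coact a ⊗ₜ[ℂ] Coalgebra.comul (R := ℂ) h))

/-- Smash product multiplication `(a⊗h)(b⊗g) = a(b ◁ h₁) ⊗ g h₂` on `B # H^{op}`. -/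
def smashMul : (B ⊗[ℂ] H) ⊗[ℂ] (B ⊗[ℂ] H) →ₗ[ℂ] B ⊗[ℂ] H :=
  (TensorProduct.map
      (LinearMap.mul' ℂ B ∘ₗ TensorProduct.map (LinearMap.id : B →ₗ[ℂ] B) act)
      (LinearMap.mul' ℂ H ∘ₗ (TensorProduct.comm ℂ H H).toLinearMap)) ∘ₗ
  (TensorProduct.map (TensorProduct.assoc ℂ B B H).toLinearMap
      (LinearMap.id : H ⊗[ℂ] H →ₗ[ℂ] H ⊗[ℂ] H)) ∘ₗ
  (TensorProduct.assoc ℂ (B ⊗[ℂ] B) H (H ⊗[ℂ] H)).symm.toLinearMap ∘ₗ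
  (TensorProduct.map (LinearMap.id : B ⊗[ℂ] B →ₗ[ℂ] B ⊗[ℂ] B)
      (TensorProduct.assoc ℂ H H H).toLinearMap) ∘ₗ
  (TensorProduct.map (LinearMap.id : B ⊗[ℂ] B →ₗ[ℂ] B ⊗[ℂ] B)
      (TensorProduct.map (Coalgebra.comul (R := ℂ)) (LinearMap.id : H →ₗ[ℂ] H))) ∘ₗ
  (TensorProduct.tensorTensorTensorComm ℂ B H B H).toLinearMap

/-- Smash product multiplication on `H # B`: `(h⊗a)(g⊗b) = h g₁ ⊗ (a ◁ g₂) b`. -/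
def smashMulR : (H ⊗[ℂ] B) ⊗[ℂ] (H ⊗[ℂ] B) →ₗ[ℂ] H ⊗[ℂ] B :=
  (TensorProduct.map (LinearMap.mul' ℂ H)
      (LinearMap.mul' ℂ B ∘ₗ
        (TensorProduct.map act (LinearMap.id : B →ₗ[ℂ] B)) ∘ₗ
        (TensorProduct.map (TensorProduct.comm ℂ H B).toLinearMap (LinearMap.id : B →ₗ[ℂ] B)) ∘ₗ
        (TensorProduct.assoc ℂ H B B).symm.toLinearMap)) ∘ₗ
  (TensorProduct.assoc ℂ (H ⊗[ℂ] H) H (B ⊗[ℂ] B)).toLinearMap ∘ₗ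
  (TensorProduct.map (TensorProduct.assoc ℂ H H H).symm.toLinearMap
      (LinearMap.id : B ⊗[ℂ] B →ₗ[ℂ] B ⊗[ℂ] B)) ∘ₗ
  (TensorProduct.map (TensorProduct.map (LinearMap.id : H →ₗ[ℂ] H) (Coalgebra.comul (R := ℂ)))
      (LinearMap.id : B ⊗[ℂ] B →ₗ[ℂ] B ⊗[ℂ] B)) ∘ₗ
  (TensorProduct.tensorTensorTensorComm ℂ H B H B).toLinearMap


/-- The antilinear anti-algebra map `⊛ : B # H^{op} → H # B`,
`(a ⊗ h)^⊛ = S⁻¹(h*) ⊗ a*`, as a plain function. -/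
def circAst (Sinv : H →ₗ[ℂ] H) (sBH : B ⊗[ℂ] H → B ⊗[ℂ] H) (x : B ⊗[ℂ] H) : H ⊗[ℂ] B :=
  (TensorProduct.map Sinv (LinearMap.id : B →ₗ[ℂ] B))
    ((TensorProduct.comm ℂ B H) (sBH x))

/-! Writing `Δh = h₁ ⊗ h₂`, both sides expand to `∑ S⁻¹(g*) S⁻¹(h₂*) ⊗ (b* ◁ S⁻¹(h₁*)) a*`.
On the left this uses the unitarity `(a ◁ h)* = a* ◁ S⁻¹(h*)` of the action and the
anti-multiplicativity of `S⁻¹ ∘ *`; on the right it needs `Δ(S⁻¹(h*)) = S⁻¹(h₂*) ⊗ S⁻¹(h₁*)`,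
which follows from `S⁻¹(k*) = (S k)*`, the `*`-compatibility of `Δ` and the
anti-comultiplicativity `Δ ∘ S = (S ⊗ S) ∘ τ ∘ Δ` of the antipode. -/

open Coalgebra HopfAlgebra WithConv
open scoped RingTheory.LinearMap

namespace LinearMap

variable {R A : Type*} [CommSemiring R] [Semiring A] [HopfAlgebra R A]

lemma comul_left_inv :
    toConv ((antipode R ⊗ₘ antipode R) ∘ₗ (TensorProduct.comm R A A).toLinearMap ∘ₗ δ) *
      toConv (δ : A →ₗ[R] A ⊗[R] A) = 1 := by
  let Λ : A ⊗[R] (A ⊗[R] A) →ₗ[R] A ⊗[R] A :=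
    lTensor A μ ∘ₗ (TensorProduct.leftComm R A A A).toLinearMap ∘ₗ (antipode R).rTensor _
  have hΛ : Λ ∘ₗ ((Algebra.linearMap R A).rTensor A).lTensor A ∘ₗ
      (TensorProduct.mk R R A 1).lTensor A =
      TensorProduct.mk R A A 1 ∘ₗ μ ∘ₗ (antipode R).rTensor A := by
    ext; simp [Λ]
  apply WithConv.ext
  simp only [convMul_def, convOne_def, ofConv_toConv]
  -- Coassociativity brings the two middle legs of `(δ ⊗ δ) ∘ δ` together, where they meet in
  -- `μ ∘ (S ⊗ id) ∘ δ = η ∘ ε`.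
  calc (μ : (A ⊗[R] A) ⊗[R] (A ⊗[R] A) →ₗ[R] A ⊗[R] A) ∘ₗ
        (((antipode R ⊗ₘ antipode R) ∘ₗ (TensorProduct.comm R A A).toLinearMap ∘ₗ δ) ⊗ₘ δ) ∘ₗ δ
      = Λ ∘ₗ ((μ ∘ₗ (antipode R).rTensor A ∘ₗ δ).rTensor A).lTensor A ∘ₗ lTensor A δ ∘ₗ δ := by
        rw [mul'_tensor]
        simp only [Λ, coassoc_simps]
    _ = Λ ∘ₗ ((Algebra.linearMap R A).rTensor A).lTensor A ∘ₗ
          (TensorProduct.mk R R A 1).lTensor A ∘ₗ δ := by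
        rw [mul_antipode_rTensor_comul, ← rTensor_counit_comp_comul]
        simp only [rTensor_comp, lTensor_comp, comp_assoc]
    _ = TensorProduct.mk R A A 1 ∘ₗ μ ∘ₗ (antipode R).rTensor A ∘ₗ δ := by
        simp only [← comp_assoc, hΛ]
    _ = Algebra.linearMap R (A ⊗[R] A) ∘ₗ ε := by
        rw [mul_antipode_rTensor_comul]
        ext; simp [Algebra.algebraMap_eq_smul_one, smul_tmul', Algebra.TensorProduct.one_def]

end LinearMap

namespace HopfAlgebra

variable {R A : Type*} [CommSemiring R] [Semiring A] [HopfAlgebra R A]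

-- Both sides are convolution inverses of `δ`.
theorem comul_comp_antipode :
    δ ∘ₗ antipode R = (antipode R ⊗ₘ antipode R) ∘ₗ (TensorProduct.comm R A A).toLinearMap ∘ₗ
      (δ : A →ₗ[R] A ⊗[R] A) :=
  congr(ofConv $(left_inv_eq_right_inv LinearMap.comul_left_inv LinearMap.comul_right_inv)).symm

theorem comul_antipode {ι : Type*} {a : A} (r : Repr R a ι) :
    comul (antipode R a) = ∑ i ∈ r.index, antipode R (r.right i) ⊗ₜ[R] antipode R (r.left i) := by
  rw [← LinearMap.comp_apply, comul_comp_antipode]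
  simp [← r.eq]

theorem comul_star_antipode [Star A] {σ : A ⊗[R] A →+ A ⊗[R] A}
    (hσ : ∀ x y : A, σ (x ⊗ₜ[R] y) = star x ⊗ₜ[R] star y)
    (hcomul_star : ∀ a : A, comul (star a) = σ (comul a)) {ι : Type*} {a : A} (r : Repr R a ι) :
    comul (star (antipode R a)) =
      ∑ i ∈ r.index, star (antipode R (r.right i)) ⊗ₜ[R] star (antipode R (r.left i)) := by
  simp [hcomul_star, comul_antipode r, hσ]

theorem apply_star_eq_star_antipode_of_leftInverse [InvolutiveStar A] {Sinv : A → A}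
    (hSinv : Function.LeftInverse Sinv (antipode R))
    (hSstar : ∀ a : A, antipode R (star (antipode R (star a))) = a) (a : A) :
    Sinv (star a) = star (antipode R a) := by
  conv_lhs => rw [← hSstar (star a), star_star, hSinv]

end HopfAlgebra

section SmashProduct

variable {H B act} {Sinv : H →ₗ[ℂ] H} {sBH : B ⊗[ℂ] H → B ⊗[ℂ] H}

omit [StarModule ℂ H] [StarModule ℂ B] in
theorem circAst_tmul (hsBH_tmul : ∀ (b : B) (h : H), sBH (b ⊗ₜ[ℂ] h) = star b ⊗ₜ[ℂ] star h)
    (b : B) (h : H) : circAst H B Sinv sBH (b ⊗ₜ[ℂ] h) = Sinv (star h) ⊗ₜ[ℂ] star b := by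
  simp [circAst, hsBH_tmul]

omit [StarRing H] [StarModule ℂ H] [StarRing B] [StarModule ℂ B]

theorem circAst_sum (hsBH_add : ∀ u v : B ⊗[ℂ] H, sBH (u + v) = sBH u + sBH v)
    {ι : Type*} (s : Finset ι) (x : ι → B ⊗[ℂ] H) :
    circAst H B Sinv sBH (∑ i ∈ s, x i) = ∑ i ∈ s, circAst H B Sinv sBH (x i) := by
  have hsum : sBH (∑ i ∈ s, x i) = ∑ i ∈ s, sBH (x i) :=
    map_sum (AddMonoidHom.mk' sBH hsBH_add) x s
  simp only [circAst, hsum, map_sum]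

theorem smashMul_tmul (a b : B) {h : H} (g : H) {ι : Type*} (r : Repr ℂ h ι) :
    smashMul H B act ((a ⊗ₜ[ℂ] h) ⊗ₜ[ℂ] (b ⊗ₜ[ℂ] g)) =
      ∑ i ∈ r.index, (a * act (b ⊗ₜ[ℂ] r.left i)) ⊗ₜ[ℂ] (g * r.right i) := by
  simp [smashMul, ← r.eq, sum_tmul, tmul_sum]

theorem smashMulR_tmul (h : H) (a : B) {g : H} (b : B) {ι : Type*} (r : Repr ℂ g ι) :
    smashMulR H B act ((h ⊗ₜ[ℂ] a) ⊗ₜ[ℂ] (g ⊗ₜ[ℂ] b)) =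
      ∑ i ∈ r.index, (h * r.left i) ⊗ₜ[ℂ] (act (a ⊗ₜ[ℂ] r.right i) * b) := by
  simp [smashMulR, ← r.eq, sum_tmul, tmul_sum]

end SmashProduct

theorem circAst_antimul (Sinv : H →ₗ[ℂ] H)
    (hSinv₁ : ∀ h : H, Sinv (HopfAlgebra.antipode (R := ℂ) h) = h)
    (sHH : H ⊗[ℂ] H → H ⊗[ℂ] H)
    (hsHH_add : ∀ u v : H ⊗[ℂ] H, sHH (u + v) = sHH u + sHH v)
    (hsHH_tmul : ∀ x y : H, sHH (x ⊗ₜ[ℂ] y) = star x ⊗ₜ[ℂ] star y)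
    (hcomul_star : ∀ h : H, Coalgebra.comul (R := ℂ) (star h) = sHH (Coalgebra.comul (R := ℂ) h))
    (hSstar : ∀ h : H,
      HopfAlgebra.antipode (R := ℂ) (star (HopfAlgebra.antipode (R := ℂ) (star h))) = h)
    (sBH : B ⊗[ℂ] H → B ⊗[ℂ] H)
    (hsBH_add : ∀ u v : B ⊗[ℂ] H, sBH (u + v) = sBH u + sBH v)
    (hsBH_tmul : ∀ (b : B) (h : H), sBH (b ⊗ₜ[ℂ] h) = star b ⊗ₜ[ℂ] star h)
    (hact_star : ∀ (b : B) (h : H),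
      star (act (b ⊗ₜ[ℂ] h)) = act (star b ⊗ₜ[ℂ] Sinv (star h)))
    :
    ∀ (a b : B) (h g : H),
      circAst H B Sinv sBH (smashMul H B act ((a ⊗ₜ[ℂ] h) ⊗ₜ[ℂ] (b ⊗ₜ[ℂ] g))) =
        smashMulR H B act
          ((circAst H B Sinv sBH (b ⊗ₜ[ℂ] g)) ⊗ₜ[ℂ]
            (circAst H B Sinv sBH (a ⊗ₜ[ℂ] h))) := by
  intro a b h g
  have hSinv_star := apply_star_eq_star_antipode_of_leftInverse hSinv₁ hSstar
  let r := ℛ ℂ h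
  let rSinv : Repr ℂ (Sinv (star h)) (H × H) :=
    { index := r.index
      left i := Sinv (star (r.right i))
      right i := Sinv (star (r.left i))
      eq := by
        simp only [hSinv_star]
        exact (comul_star_antipode (σ := AddMonoidHom.mk' sHH hsHH_add) hsHH_tmul hcomul_star
          r).symm }
  rw [smashMul_tmul a b g r, circAst_sum hsBH_add, circAst_tmul hsBH_tmul,
    circAst_tmul hsBH_tmul, smashMulR_tmul _ _ _ rSinv]
  refine Finset.sum_congr rfl fun i _ => ?_
  rw [circAst_tmul hsBH_tmul, hSinv_star (g * _), antipode_mul_antidistrib, star_mul, star_mul a,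
    hact_star]
  simp only [rSinv, hSinv_star]
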